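/- Let (V,d,b) be an acyclic information network and T ≥ 1. Then for all A ⊆ B ⊆ V\{d}, Â ⊆ B̂ ⊆ V\{d}, and w ∈ (V\{d}) \ (B ∪ B̂): (1) σ̄(A∪{w}, Â) − σ̄(A, Â) ≥ σ̄(B∪{w}, B̂) − σ̄(B, B̂); (2) σ̄(A, Â∪{w}) − σ̄(A, Â) ≥ σ̄(B, B̂∪{w}) − σ̄(B, B̂); and (3) σ̄(A, Â) ≤ σ̄(B, B̂); that is, the expected influence σ̄ over [1,T] is submodular and monotone in each argument. -/
import Mathlib


open MeasureTheory

/-- An information network: a finite node set `V` with a distinguished void node `d`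
and a row-stochastic weight matrix `b` with entries in `[0,1]` and `b d d = 1`. -/
structure InfoNetwork (V : Type*) [Fintype V] where
  d : V
  b : V → V → ℝ
  b_nonneg : ∀ v u, 0 ≤ b v u
  b_le_one : ∀ v u, b v u ≤ 1
  row_sum : ∀ v, ∑ u, b v u = 1
  void_loop : b d d = 1

/-- The uniform probability measure on the interval `(0,1)`. -/
noncomputable def unifMeasure : Measure ℝ := volume.restrict (Set.Ioo (0:ℝ) 1)

/-- Product over `V` of uniform measures on `(0,1)`: the distribution of the thresholds. -/
noncomputable def thresholdMeasure (V : Type*) [Fintype V] : Measure (V → ℝ) :=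
  Measure.pi fun _ : V => unifMeasure

namespace InfoNetwork

variable {V : Type*} [Fintype V]

/-- The set of active nodes at time `t` under the non-progressive linear threshold model,
with transient initial set `A`, permanent initial set `Ahat` and thresholds `θ`. -/
noncomputable def activeSet (N : InfoNetwork V) (A Ahat : Set V) (θ : V → ℝ) : ℕ → Set V
  | 0 => A ∪ Ahat
  | t+1 => Ahat ∪
      {v | v ∉ Ahat ∧ θ v ≤ ∑ u, (N.activeSet A Ahat θ t).indicator (N.b v) u}

/-- `E[X^t_v(A,Ahat)]`: the probability (over the random thresholds) that `v` is active
at time `t`. -/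
noncomputable def EX (N : InfoNetwork V) (A Ahat : Set V) (t : ℕ) (v : V) : ℝ :=
  (thresholdMeasure V {θ | v ∈ N.activeSet A Ahat θ t}).toReal

/-- The expected influence over the period `[1,T]`. -/
noncomputable def sigmaBar (N : InfoNetwork V) (T : ℕ) (A Ahat : Set V) : ℝ :=
  (1 / (T : ℝ)) * ∑ t ∈ Finset.Icc 1 T, ∑ v, N.EX A Ahat t v

/-- The edge relation of the directed graph on `V \ {d}`. -/
def edgeRel (N : InfoNetwork V) (v u : V) : Prop :=
  v ≠ N.d ∧ u ≠ N.d ∧ 0 < N.b v u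

/-- The network is acyclic if the directed graph on `V \ {d}` has no directed cycle. -/
def Acyclic (N : InfoNetwork V) : Prop :=
  ∀ v, ¬ Relation.TransGen N.edgeRel v v

end InfoNetwork

/-- A real-valued set function `f` is submodular on the ground set `S`. -/
def SubmodularOn {V : Type*} (S : Set V) (f : Set V → ℝ) : Prop :=
  ∀ A B : Set V, A ⊆ B → B ⊆ S → ∀ w ∈ S, w ∉ B →
    f (insert w B) - f B ≤ f (insert w A) - f A


section Helpers

instance : IsProbabilityMeasure unifMeasure :=
  ⟨by rw [unifMeasure, Measure.restrict_apply_univ, Real.volume_Ioo]; norm_num⟩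

instance (V : Type*) [Fintype V] : IsProbabilityMeasure (thresholdMeasure V) :=
  inferInstanceAs (IsProbabilityMeasure (Measure.pi fun _ : V => unifMeasure))

lemma unif_Iic {c : ℝ} (h0 : 0 ≤ c) (h1 : c ≤ 1) :
    unifMeasure (Set.Iic c) = ENNReal.ofReal c := by
  rw [unifMeasure, Measure.restrict_apply measurableSet_Iic]
  refine le_antisymm ?_ ?_
  · calc volume (Set.Iic c ∩ Set.Ioo 0 1) ≤ volume (Set.Ioc 0 c) := by
          refine measure_mono fun x hx => ?_
          exact ⟨hx.2.1, hx.1⟩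
      _ = ENNReal.ofReal c := by rw [Real.volume_Ioc]; norm_num
  · calc ENNReal.ofReal c = volume (Set.Ioo 0 c) := by rw [Real.volume_Ioo]; norm_num
      _ ≤ volume (Set.Iic c ∩ Set.Ioo 0 1) := by
          refine measure_mono fun x hx => ?_
          exact ⟨le_of_lt hx.2, hx.1, lt_of_lt_of_le hx.2 h1⟩

open Classical in
lemma ae_pos_coord (V : Type*) [Fintype V] (i : V) :
    ∀ᵐ θ ∂(thresholdMeasure V), 0 < θ i := by
  rw [MeasureTheory.ae_iff]
  have hset : {θ : V → ℝ | ¬ 0 < θ i} =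
      Set.pi Set.univ (fun j => if j = i then Set.Iic 0 else Set.univ) := by
    ext θ
    simp only [Set.mem_setOf_eq, Set.mem_pi, Set.mem_univ, forall_true_left, not_lt]
    constructor
    · intro h j
      by_cases hj : j = i
      · subst hj; simp [h]
      · simp [hj]
    · intro h
      have := h i
      simpa using this
  rw [hset, thresholdMeasure, Measure.pi_pi]
  refine Finset.prod_eq_zero (Finset.mem_univ i) ?_
  rw [if_pos rfl, unifMeasure, Measure.restrict_apply measurableSet_Iic]
  convert measure_empty
  · ext x; simp only [Set.mem_inter_iff, Set.mem_Iic, Set.mem_Ioo, Set.mem_empty_iff_false,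
      iff_false, not_and]
    intro h hx hx1; exact absurd hx (not_lt.2 h)
  · infer_instance


namespace InfoNetwork

variable {V : Type*} [Fintype V]

open Classical in
noncomputable def pfun (N : InfoNetwork V) (A Ahat : Set V) : ℕ → V → ℝ
  | 0 => fun v => if v ∈ A ∪ Ahat then 1 else 0
  | t+1 => fun v => if v ∈ Ahat then 1 else ∑ u, N.b v u * N.pfun A Ahat t u

variable (N : InfoNetwork V)

lemma pfun_nonneg (A Ahat : Set V) : ∀ t v, 0 ≤ N.pfun A Ahat t v := by
  intro t
  induction t with
  | zero => intro v; simp only [pfun]; split <;> norm_num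
  | succ t ih =>
    intro v; simp only [pfun]; split
    · norm_num
    · exact Finset.sum_nonneg fun u _ => mul_nonneg (N.b_nonneg v u) (ih u)

lemma pfun_le_one (A Ahat : Set V) : ∀ t v, N.pfun A Ahat t v ≤ 1 := by
  intro t
  induction t with
  | zero => intro v; simp only [pfun]; split <;> norm_num
  | succ t ih =>
    intro v; simp only [pfun]; split
    · norm_num
    · calc ∑ u, N.b v u * N.pfun A Ahat t u ≤ ∑ u, N.b v u := by
            refine Finset.sum_le_sum fun u _ => ?_
            calc N.b v u * N.pfun A Ahat t u ≤ N.b v u * 1 :=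
                  mul_le_mul_of_nonneg_left (ih u) (N.b_nonneg v u)
              _ = N.b v u := mul_one _
        _ = 1 := N.row_sum v

lemma pfun_mono {A B Ahat Bhat : Set V} (hAB : A ⊆ B) (hhat : Ahat ⊆ Bhat) :
    ∀ t v, N.pfun A Ahat t v ≤ N.pfun B Bhat t v := by
  intro t
  induction t with
  | zero =>
    intro v; simp only [pfun]
    split
    · rename_i h1
      have h2 : v ∈ B ∪ Bhat := h1.imp (fun h => hAB h) (fun h => hhat h)
      simp [h2]
    · split <;> norm_num
  | succ t ih =>
    intro v; simp only [pfun]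
    by_cases hv : v ∈ Ahat
    · simp only [if_pos hv, if_pos (hhat hv)]
      exact le_refl 1
    · rw [if_neg hv]
      by_cases hv' : v ∈ Bhat
      · rw [if_pos hv']
        calc ∑ u, N.b v u * N.pfun A Ahat t u ≤ ∑ u, N.b v u := by
              refine Finset.sum_le_sum fun u _ => ?_
              calc N.b v u * N.pfun A Ahat t u ≤ N.b v u * 1 :=
                    mul_le_mul_of_nonneg_left (N.pfun_le_one A Ahat t u) (N.b_nonneg v u)
                _ = N.b v u := mul_one _
          _ = 1 := N.row_sum v
      · rw [if_neg hv']
        exact Finset.sum_le_sum fun u _ =>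
          mul_le_mul_of_nonneg_left (ih u) (N.b_nonneg v u)

lemma pfun_sum_le_sum {A B Ahat Bhat : Set V} (hAB : A ⊆ B) (hhat : Ahat ⊆ Bhat)
    (t : ℕ) (v : V) :
    ∑ u, N.b v u * N.pfun A Ahat t u ≤ ∑ u, N.b v u * N.pfun B Bhat t u :=
  Finset.sum_le_sum fun u _ =>
    mul_le_mul_of_nonneg_left (N.pfun_mono hAB hhat t u) (N.b_nonneg v u)

lemma pfun_submod1 {A B Ahat Bhat : Set V} (hAB : A ⊆ B) (hhat : Ahat ⊆ Bhat)
    {w : V} (hw : w ∉ B ∪ Bhat) :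
    ∀ t v, N.pfun (insert w B) Bhat t v - N.pfun B Bhat t v ≤
      N.pfun (insert w A) Ahat t v - N.pfun A Ahat t v := by
  intro t
  induction t with
  | zero =>
    intro v
    classical
    by_cases hv : v ∈ B ∪ Bhat
    · have h1 : v ∈ insert w B ∪ Bhat := hv.imp (fun h => Set.mem_insert_of_mem w h) id
      have h0 : N.pfun (insert w B) Bhat 0 v - N.pfun B Bhat 0 v = 0 := by
        simp only [pfun, if_pos hv, if_pos h1, sub_self]
      rw [h0, sub_nonneg]
      exact N.pfun_mono (Set.subset_insert w A) (le_refl Ahat) 0 v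
    · have hvA : v ∉ A ∪ Ahat := fun h => hv (h.imp (fun h => hAB h) (fun h => hhat h))
      have key : ∀ (S Shat : Set V), v ∉ S ∪ Shat →
          N.pfun (insert w S) Shat 0 v - N.pfun S Shat 0 v = if v = w then 1 else 0 := by
        intro S Shat hS
        simp only [pfun, if_neg hS, sub_zero]
        by_cases hvw : v = w
        · subst hvw
          rw [if_pos rfl, if_pos (Set.mem_union_left Shat (Set.mem_insert v S))]
        · rw [if_neg hvw, if_neg]
          intro h
          rcases h with h | h
          · rcases h with h | h
            · exact hvw h
            · exact hS (Or.inl h)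
          · exact hS (Or.inr h)
      rw [key B Bhat hv, key A Ahat hvA]
  | succ t ih =>
    intro v
    simp only [pfun]
    by_cases hv : v ∈ Ahat
    · simp [if_pos hv, if_pos (hhat hv)]
    · rw [if_neg hv, if_neg hv]
      by_cases hv' : v ∈ Bhat
      · rw [if_pos hv', if_pos hv', sub_self]
        rw [sub_nonneg]
        exact N.pfun_sum_le_sum (Set.subset_insert w A) (le_refl Ahat) t v
      · rw [if_neg hv', if_neg hv', ← Finset.sum_sub_distrib, ← Finset.sum_sub_distrib]
        refine Finset.sum_le_sum fun u _ => ?_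
        rw [← mul_sub, ← mul_sub]
        exact mul_le_mul_of_nonneg_left (ih u) (N.b_nonneg v u)

lemma pfun_submod2 {A B Ahat Bhat : Set V} (hAB : A ⊆ B) (hhat : Ahat ⊆ Bhat)
    {w : V} (hw : w ∉ B ∪ Bhat) :
    ∀ t v, N.pfun B (insert w Bhat) t v - N.pfun B Bhat t v ≤
      N.pfun A (insert w Ahat) t v - N.pfun A Ahat t v := by
  intro t
  induction t with
  | zero =>
    intro v
    classical
    have e1 : ∀ (S Shat : Set V), S ∪ insert w Shat = insert w (S ∪ Shat) := by
      intro S Shat; rw [Set.union_insert]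
    by_cases hv : v ∈ B ∪ Bhat
    · have h1 : v ∈ B ∪ insert w Bhat := by rw [e1]; exact Set.mem_insert_of_mem w hv
      have h0 : N.pfun B (insert w Bhat) 0 v - N.pfun B Bhat 0 v = 0 := by
        simp only [pfun, if_pos hv, if_pos h1, sub_self]
      rw [h0, sub_nonneg]
      exact N.pfun_mono (le_refl A) (Set.subset_insert w Ahat) 0 v
    · have hvA : v ∉ A ∪ Ahat := fun h => hv (h.imp (fun h => hAB h) (fun h => hhat h))
      have key : ∀ (S Shat : Set V), v ∉ S ∪ Shat →
          N.pfun S (insert w Shat) 0 v - N.pfun S Shat 0 v = if v = w then 1 else 0 := by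
        intro S Shat hS
        simp only [pfun, if_neg hS, sub_zero]
        by_cases hvw : v = w
        · subst hvw
          rw [if_pos rfl, if_pos (Set.mem_union_right S (Set.mem_insert v Shat))]
        · rw [if_neg hvw, if_neg]
          intro h
          rcases h with h | h
          · exact hS (Or.inl h)
          · rcases h with h | h
            · exact hvw h
            · exact hS (Or.inr h)
      rw [key B Bhat hv, key A Ahat hvA]
  | succ t ih =>
    intro v
    classical
    by_cases hvw : v = w
    · subst hvw
      have hvB : v ∉ Bhat := fun h => hw (Or.inr h)
      have hvA : v ∉ Ahat := fun h => hvB (hhat h)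
      have m1 : v ∈ insert v Bhat := Set.mem_insert v Bhat
      have m2 : v ∈ insert v Ahat := Set.mem_insert v Ahat
      simp only [pfun, if_pos m1, if_pos m2, if_neg hvB, if_neg hvA]
      have := N.pfun_sum_le_sum hAB hhat t v
      linarith
    · by_cases hv : v ∈ Ahat
      · have hv2 : v ∈ insert w Ahat := Set.mem_insert_of_mem w hv
        have hv3 : v ∈ Bhat := hhat hv
        have hv4 : v ∈ insert w Bhat := Set.mem_insert_of_mem w hv3
        simp only [pfun, if_pos hv, if_pos hv2, if_pos hv3, if_pos hv4, sub_self, le_refl]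
      · by_cases hv' : v ∈ Bhat
        · have hv4 : v ∈ insert w Bhat := Set.mem_insert_of_mem w hv'
          have h0 : N.pfun B (insert w Bhat) (t+1) v - N.pfun B Bhat (t+1) v = 0 := by
            simp only [pfun, if_pos hv', if_pos hv4, sub_self]
          rw [h0, sub_nonneg]
          exact N.pfun_mono (le_refl A) (Set.subset_insert w Ahat) (t+1) v
        · have hv2 : v ∉ insert w Ahat := by
            intro h; rcases h with h | h
            · exact hvw h
            · exact hv h
          have hv4 : v ∉ insert w Bhat := by
            intro h; rcases h with h | h
            · exact hvw h
            · exact hv' h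
          simp only [pfun, if_neg hv, if_neg hv', if_neg hv2, if_neg hv4]
          rw [← Finset.sum_sub_distrib, ← Finset.sum_sub_distrib]
          refine Finset.sum_le_sum fun u _ => ?_
          rw [← mul_sub, ← mul_sub]
          exact mul_le_mul_of_nonneg_left (ih u) (N.b_nonneg v u)


variable (N : InfoNetwork V)

/-- Off-diagonal entries of the void row vanish. -/
lemma b_void {u : V} (hu : u ≠ N.d) : N.b N.d u = 0 := by
  classical
  have h1 : ∑ x ∈ Finset.univ.erase N.d, N.b N.d x = 0 := by
    have h2 : N.b N.d N.d + ∑ x ∈ Finset.univ.erase N.d, N.b N.d x = 1 := by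
      rw [Finset.add_sum_erase Finset.univ (N.b N.d) (Finset.mem_univ N.d)]
      exact N.row_sum N.d
    rw [N.void_loop] at h2; linarith
  have := (Finset.sum_eq_zero_iff_of_nonneg
    (fun x _ => N.b_nonneg N.d x)).1 h1 u (Finset.mem_erase.2 ⟨hu, Finset.mem_univ u⟩)
  exact this

/-- The void node is never active when its threshold is positive. -/
lemma void_not_active {A Ahat : Set V} (hA : N.d ∉ A) (hAhat : N.d ∉ Ahat)
    {θ : V → ℝ} (hθ : 0 < θ N.d) : ∀ t, N.d ∉ N.activeSet A Ahat θ t := by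
  classical
  intro t
  induction t with
  | zero =>
    simp only [activeSet, Set.mem_union]
    rintro (h | h)
    · exact hA h
    · exact hAhat h
  | succ t ih =>
    simp only [activeSet, Set.mem_union, Set.mem_setOf_eq]
    rintro (h | ⟨-, h⟩)
    · exact hAhat h
    · have hz : ∑ u, (N.activeSet A Ahat θ t).indicator (N.b N.d) u = 0 := by
        refine Finset.sum_eq_zero fun u _ => ?_
        by_cases hu : u = N.d
        · subst hu; exact Set.indicator_of_notMem ih _
        · rw [Set.indicator_apply]
          split
          · exact N.b_void hu
          · rfl
      rw [hz] at h
      exact absurd h (not_le.2 hθ)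

/-- Nodes reachable from a non-void node are non-void. -/
lemma reach_ne_void {u x : V} (hu : u ≠ N.d)
    (h : Relation.ReflTransGen N.edgeRel u x) : x ≠ N.d := by
  induction h with
  | refl => exact hu
  | tail _ e _ => exact e.2.1

/-- Activity of a node depends only on thresholds of nodes reachable from it. -/
lemma active_congr {A Ahat : Set V} (hA : N.d ∉ A) (hAhat : N.d ∉ Ahat)
    {θ θ' : V → ℝ} (hθ : 0 < θ N.d) (hθ' : 0 < θ' N.d) :
    ∀ t u, (∀ x, Relation.ReflTransGen N.edgeRel u x → θ x = θ' x) →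
      (u ∈ N.activeSet A Ahat θ t ↔ u ∈ N.activeSet A Ahat θ' t) := by
  classical
  intro t
  induction t with
  | zero => intro u _; exact Iff.rfl
  | succ t ih =>
    intro u hagree
    simp only [activeSet, Set.mem_union, Set.mem_setOf_eq]
    refine or_congr Iff.rfl (and_congr Iff.rfl ?_)
    have hsum : ∑ j, (N.activeSet A Ahat θ t).indicator (N.b u) j =
        ∑ j, (N.activeSet A Ahat θ' t).indicator (N.b u) j := by
      refine Finset.sum_congr rfl fun j _ => ?_
      by_cases hbj : N.b u j = 0
      · rw [Set.indicator_apply, Set.indicator_apply, hbj]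
        simp
      · have hbpos : 0 < N.b u j := lt_of_le_of_ne (N.b_nonneg u j) (Ne.symm hbj)
        by_cases hj : j = N.d
        · subst hj
          rw [Set.indicator_of_notMem (N.void_not_active hA hAhat hθ t),
            Set.indicator_of_notMem (N.void_not_active hA hAhat hθ' t)]
        · have hu : u ≠ N.d := by
            rintro rfl
            exact hbj (N.b_void hj)
          have hedge : N.edgeRel u j := ⟨hu, hj, hbpos⟩
          have hagree' : ∀ x, Relation.ReflTransGen N.edgeRel j x → θ x = θ' x :=
            fun x hx => hagree x (Relation.ReflTransGen.head hedge hx)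
          rw [Set.indicator_apply, Set.indicator_apply]
          exact if_congr (ih j hagree') rfl rfl
    rw [hsum, hagree u Relation.ReflTransGen.refl]

/-- Measurability of activity events. -/
lemma measurableSet_active (A Ahat : Set V) :
    ∀ t u, MeasurableSet {θ : V → ℝ | u ∈ N.activeSet A Ahat θ t} := by
  classical
  intro t
  induction t with
  | zero =>
    intro u
    by_cases h : u ∈ A ∪ Ahat
    · have : {θ : V → ℝ | u ∈ N.activeSet A Ahat θ 0} = Set.univ := by
        ext θ; simp [activeSet, h]
      rw [this]; exact MeasurableSet.univ
    · have : {θ : V → ℝ | u ∈ N.activeSet A Ahat θ 0} = ∅ := by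
        ext θ; simp only [activeSet, Set.mem_setOf_eq, Set.mem_empty_iff_false, iff_false]
        exact h
      rw [this]; exact MeasurableSet.empty
  | succ t ih =>
    intro u
    by_cases h : u ∈ Ahat
    · have : {θ : V → ℝ | u ∈ N.activeSet A Ahat θ (t+1)} = Set.univ := by
        ext θ; simp [activeSet, h]
      rw [this]; exact MeasurableSet.univ
    · have heq : {θ : V → ℝ | u ∈ N.activeSet A Ahat θ (t+1)} =
          {θ : V → ℝ | θ u ≤ ∑ j, (N.activeSet A Ahat θ t).indicator (N.b u) j} := by
        ext θ; simp [activeSet, h]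
      rw [heq]
      have hF : Measurable fun θ : V → ℝ =>
          ∑ j, (N.activeSet A Ahat θ t).indicator (N.b u) j := by
        refine Finset.measurable_sum _ fun j _ => ?_
        have : (fun θ : V → ℝ => (N.activeSet A Ahat θ t).indicator (N.b u) j) =
            (fun θ : V → ℝ => Set.indicator {θ : V → ℝ | j ∈ N.activeSet A Ahat θ t}
              (fun _ => N.b u j) θ) := by
          funext θ
          rw [Set.indicator_apply, Set.indicator_apply]
          rfl
        rw [this]
        exact Measurable.indicator measurable_const (ih j)
      exact measurableSet_le (measurable_pi_apply u) hF


/-- Acyclicity: no reachability back to the source of an edge. -/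
lemma not_reach_back (hacyc : N.Acyclic) {v u : V} (hv : v ≠ N.d) (hu : u ≠ N.d)
    (hb : 0 < N.b v u) {x : V} (hx : Relation.ReflTransGen N.edgeRel u x) : x ≠ v := by
  rintro rfl
  exact hacyc x (Relation.TransGen.head' ⟨hv, hu, hb⟩ hx)

/-- The key recursion for activation probabilities in an acyclic network. -/
lemma measure_active_succ (hacyc : N.Acyclic) {A Ahat : Set V} (hA : N.d ∉ A)
    (hAhat : N.d ∉ Ahat) {v : V} (hv : v ≠ N.d) (hvA : v ∉ Ahat) (t : ℕ) :
    thresholdMeasure V {θ | v ∈ N.activeSet A Ahat θ (t+1)} =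
      ∑ u, ENNReal.ofReal (N.b v u) *
        thresholdMeasure V {θ | u ∈ N.activeSet A Ahat θ t} := by
  classical
  set dm : (V → ℝ) → (V → ℝ) := fun θ => Function.update θ N.d (1/2) with hdm
  have hdm_meas : Measurable dm := by
    refine measurable_pi_lambda _ fun j => ?_
    simp only [hdm, Function.update_apply]
    by_cases hj : j = N.d
    · simp [hj]
    · simp only [hj, if_false]
      exact measurable_pi_apply j
  have hdm_d : ∀ θ : V → ℝ, (0:ℝ) < dm θ N.d := by
    intro θ; simp only [hdm, Function.update_self]; norm_num
  set F : (V → ℝ) → ℝ :=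
    fun θ => ∑ u, (N.activeSet A Ahat (dm θ) t).indicator (N.b v) u with hF
  have hTu : ∀ u t', MeasurableSet {θ : V → ℝ | u ∈ N.activeSet A Ahat (dm θ) t'} := by
    intro u t'
    have heq : {θ : V → ℝ | u ∈ N.activeSet A Ahat (dm θ) t'} =
        dm ⁻¹' {θ | u ∈ N.activeSet A Ahat θ t'} := rfl
    rw [heq]
    exact hdm_meas (N.measurableSet_active A Ahat t' u)
  have hFmeas : Measurable F := by
    refine Finset.measurable_sum _ fun u _ => ?_
    have heq : (fun θ : V → ℝ => (N.activeSet A Ahat (dm θ) t).indicator (N.b v) u)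
        = Set.indicator {θ : V → ℝ | u ∈ N.activeSet A Ahat (dm θ) t}
            (fun _ => N.b v u) := by
      funext θ; rw [Set.indicator_apply, Set.indicator_apply]; rfl
    rw [heq]
    exact Measurable.indicator measurable_const (hTu u t)
  have hF0 : ∀ θ, 0 ≤ F θ := by
    intro θ
    refine Finset.sum_nonneg fun u _ => ?_
    rw [Set.indicator_apply]
    split
    · exact N.b_nonneg v u
    · exact le_refl 0
  have hF1 : ∀ θ, F θ ≤ 1 := by
    intro θ
    have hle : F θ ≤ ∑ u, N.b v u := by
      refine Finset.sum_le_sum fun u _ => ?_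
      rw [Set.indicator_apply]
      split
      · exact le_refl _
      · exact N.b_nonneg v u
    rw [N.row_sum v] at hle
    exact hle
  have hFinv : ∀ θ r, F (Function.update θ v r) = F θ := by
    intro θ r
    refine Finset.sum_congr rfl fun u _ => ?_
    by_cases hbu : N.b v u = 0
    · rw [Set.indicator_apply, Set.indicator_apply, hbu]; simp
    · have hbpos : 0 < N.b v u := lt_of_le_of_ne (N.b_nonneg v u) (Ne.symm hbu)
      by_cases hu : u = N.d
      · subst hu
        rw [Set.indicator_of_notMem (N.void_not_active hA hAhat (hdm_d _) t),
          Set.indicator_of_notMem (N.void_not_active hA hAhat (hdm_d _) t)]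
      · have hmem : u ∈ N.activeSet A Ahat (dm (Function.update θ v r)) t ↔
            u ∈ N.activeSet A Ahat (dm θ) t := by
          refine N.active_congr hA hAhat (hdm_d _) (hdm_d _) t u fun x hx => ?_
          have hxv : x ≠ v := N.not_reach_back hacyc hv hu hbpos hx
          by_cases hxd : x = N.d
          · subst hxd
            simp only [hdm, Function.update_self]
          · simp only [hdm, Function.update_of_ne hxd, Function.update_of_ne hxv]
        rw [Set.indicator_apply, Set.indicator_apply]
        exact if_congr hmem rfl rfl
  have hdm_agree : ∀ (θ : V → ℝ) (u : V), u ≠ N.d →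
      ∀ x, Relation.ReflTransGen N.edgeRel u x → dm θ x = θ x := by
    intro θ u hu x hx
    have hxd : x ≠ N.d := N.reach_ne_void hu hx
    simp only [hdm, Function.update_of_ne hxd]
  have hae : thresholdMeasure V {θ | v ∈ N.activeSet A Ahat θ (t+1)} =
      thresholdMeasure V {θ | θ v ≤ F θ} := by
    refine measure_congr (Filter.eventuallyEq_set.2 ?_)
    filter_upwards [ae_pos_coord V N.d] with θ hθ
    have hFθ : (∑ u, (N.activeSet A Ahat θ t).indicator (N.b v) u) = F θ := by
      refine Finset.sum_congr rfl fun u _ => ?_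
      by_cases hu : u = N.d
      · subst hu
        rw [Set.indicator_of_notMem (N.void_not_active hA hAhat hθ t),
          Set.indicator_of_notMem (N.void_not_active hA hAhat (hdm_d θ) t)]
      · have hmem : u ∈ N.activeSet A Ahat θ t ↔ u ∈ N.activeSet A Ahat (dm θ) t := by
          refine N.active_congr hA hAhat hθ (hdm_d θ) t u fun x hx => ?_
          exact (hdm_agree θ u hu x hx).symm
        rw [Set.indicator_apply, Set.indicator_apply]
        exact if_congr hmem rfl rfl
    simp only [Set.mem_setOf_eq, activeSet, Set.mem_union]
    constructor
    · rintro (h | ⟨-, h⟩)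
      · exact absurd h hvA
      · rw [← hFθ]; exact h
    · intro h
      exact Or.inr ⟨hvA, by rw [hFθ]; exact h⟩
  have hSmeas : MeasurableSet {θ : V → ℝ | θ v ≤ F θ} :=
    measurableSet_le (measurable_pi_apply v) hFmeas
  have key : thresholdMeasure V {θ : V → ℝ | θ v ≤ F θ} =
      ∫⁻ θ, ENNReal.ofReal (F θ) ∂thresholdMeasure V := by
    rw [← lintegral_indicator_one hSmeas]
    rw [thresholdMeasure]
    refine lintegral_eq_of_lmarginal_eq {v}
      (measurable_one.indicator hSmeas) (ENNReal.measurable_ofReal.comp hFmeas) ?_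
    funext x
    rw [lmarginal_singleton, lmarginal_singleton]
    have hL : ∀ r : ℝ, Set.indicator {θ : V → ℝ | θ v ≤ F θ} 1 (Function.update x v r)
        = Set.indicator (Set.Iic (F x)) (fun _ => (1:ENNReal)) r := by
      intro r
      rw [Set.indicator_apply, Set.indicator_apply]
      refine if_congr ?_ rfl rfl
      simp only [Set.mem_setOf_eq, Set.mem_Iic, Function.update_self, hFinv x r]
    simp_rw [hL, hFinv]
    rw [lintegral_indicator_const measurableSet_Iic, unif_Iic (hF0 x) (hF1 x),
      lintegral_const, one_mul, measure_univ, mul_one]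
  have stepC : ∫⁻ θ, ENNReal.ofReal (F θ) ∂thresholdMeasure V
      = ∑ u, ENNReal.ofReal (N.b v u) *
          thresholdMeasure V {θ | u ∈ N.activeSet A Ahat (dm θ) t} := by
    have hsplit : ∀ θ, ENNReal.ofReal (F θ) = ∑ u, ENNReal.ofReal (N.b v u) *
        Set.indicator {θ : V → ℝ | u ∈ N.activeSet A Ahat (dm θ) t}
          (fun _ => (1:ENNReal)) θ := by
      intro θ
      rw [hF]
      rw [ENNReal.ofReal_sum_of_nonneg (fun u _ => by
        rw [Set.indicator_apply]
        split
        · exact N.b_nonneg v u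
        · exact le_refl 0)]
      refine Finset.sum_congr rfl fun u _ => ?_
      rw [Set.indicator_apply, Set.indicator_apply]
      by_cases hm : u ∈ N.activeSet A Ahat (dm θ) t
      · simp only [Set.mem_setOf_eq, if_pos hm, mul_one]
      · simp only [Set.mem_setOf_eq, if_neg hm, mul_zero, ENNReal.ofReal_zero]
    rw [lintegral_congr hsplit]
    rw [lintegral_finset_sum _ (fun u _ =>
      (Measurable.indicator measurable_const (hTu u t)).const_mul _)]
    refine Finset.sum_congr rfl fun u _ => ?_
    rw [lintegral_const_mul _ (Measurable.indicator measurable_const (hTu u t)),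
      lintegral_indicator_const (hTu u t), one_mul]
  have stepD : ∀ u, thresholdMeasure V {θ | u ∈ N.activeSet A Ahat (dm θ) t} =
      thresholdMeasure V {θ | u ∈ N.activeSet A Ahat θ t} := by
    intro u
    refine measure_congr (Filter.eventuallyEq_set.2 ?_)
    filter_upwards [ae_pos_coord V N.d] with θ hθ
    by_cases hu : u = N.d
    · subst hu
      constructor
      · intro h; exact absurd h (N.void_not_active hA hAhat (hdm_d θ) t)
      · intro h; exact absurd h (N.void_not_active hA hAhat hθ t)
    · exact N.active_congr hA hAhat (hdm_d θ) hθ t u (hdm_agree θ u hu)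
  rw [hae, key, stepC]
  exact Finset.sum_congr rfl fun u _ => by rw [stepD u]


lemma measure_active_void {A Ahat : Set V} (hA : N.d ∉ A) (hAhat : N.d ∉ Ahat) (t : ℕ) :
    thresholdMeasure V {θ | N.d ∈ N.activeSet A Ahat θ t} = 0 := by
  refine measure_mono_null (t := {θ : V → ℝ | ¬ 0 < θ N.d}) (fun θ h => ?_)
    (MeasureTheory.ae_iff.1 (ae_pos_coord V N.d))
  intro hpos
  exact N.void_not_active hA hAhat hpos t h

lemma pfun_void {A Ahat : Set V} (hA : N.d ∉ A) (hAhat : N.d ∉ Ahat) :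
    ∀ t, N.pfun A Ahat t N.d = 0 := by
  classical
  intro t
  induction t with
  | zero =>
    simp only [pfun]
    rw [if_neg]
    rintro (h | h)
    · exact hA h
    · exact hAhat h
  | succ t ih =>
    simp only [pfun]
    rw [if_neg hAhat]
    refine Finset.sum_eq_zero fun u _ => ?_
    by_cases hu : u = N.d
    · subst hu; rw [ih, mul_zero]
    · rw [N.b_void hu, zero_mul]

lemma EX_eq_pfun (hacyc : N.Acyclic) {A Ahat : Set V} (hA : N.d ∉ A) (hAhat : N.d ∉ Ahat) :
    ∀ t v, N.EX A Ahat t v = N.pfun A Ahat t v := by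
  classical
  intro t
  induction t with
  | zero =>
    intro v
    rw [EX]
    by_cases h : v ∈ A ∪ Ahat
    · have heq : {θ : V → ℝ | v ∈ N.activeSet A Ahat θ 0} = Set.univ := by
        ext θ; simp only [activeSet, Set.mem_setOf_eq, Set.mem_univ, iff_true]; exact h
      rw [heq, measure_univ, ENNReal.toReal_one]
      simp [pfun, h]
    · have heq : {θ : V → ℝ | v ∈ N.activeSet A Ahat θ 0} = ∅ := by
        ext θ; simp only [activeSet, Set.mem_setOf_eq, Set.mem_empty_iff_false, iff_false]
        exact h
      rw [heq, measure_empty, ENNReal.toReal_zero]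
      simp [pfun, h]
  | succ t ih =>
    intro v
    by_cases hva : v ∈ Ahat
    · have heq : {θ : V → ℝ | v ∈ N.activeSet A Ahat θ (t+1)} = Set.univ := by
        ext θ
        simp only [activeSet, Set.mem_setOf_eq, Set.mem_union, Set.mem_univ, iff_true]
        exact Or.inl hva
      rw [EX, heq, measure_univ, ENNReal.toReal_one]
      simp [pfun, hva]
    · by_cases hvd : v = N.d
      · subst hvd
        rw [EX, N.measure_active_void hA hAhat (t+1), ENNReal.toReal_zero,
          N.pfun_void hA hAhat (t+1)]
      · rw [EX, N.measure_active_succ hacyc hA hAhat hvd hva t,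
          ENNReal.toReal_sum (fun u _ => ENNReal.mul_ne_top ENNReal.ofReal_ne_top
            (measure_ne_top _ _))]
        have hterm : ∀ u, (ENNReal.ofReal (N.b v u) *
            thresholdMeasure V {θ | u ∈ N.activeSet A Ahat θ t}).toReal
            = N.b v u * N.pfun A Ahat t u := by
          intro u
          rw [ENNReal.toReal_mul, ENNReal.toReal_ofReal (N.b_nonneg v u)]
          congr 1
          exact ih u
        simp only [hterm]
        simp [pfun, hva]

end InfoNetwork

end Helpers

/-- in an acyclic network, the expected influence `σ̄` over `[1,T]` is
submodular and monotone in each argument: for `A ⊆ B ⊆ V \ {d}`,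
`Ahat ⊆ Bhat ⊆ V \ {d}` and `w ∈ (V \ {d}) \ (B ∪ Bhat)`,
(1) the marginal gain of adding `w` transiently at `(A, Ahat)` dominates that at `(B, Bhat)`;
(2) likewise for adding `w` permanently; and (3) `σ̄(A, Ahat) ≤ σ̄(B, Bhat)`. -/
theorem sigmaBar_submodular_monotone {V : Type*} [Fintype V] (N : InfoNetwork V)
    (hacyc : N.Acyclic) (T : ℕ) (hT : 1 ≤ T)
    (A B Ahat Bhat : Set V) (hAB : A ⊆ B) (hB : B ⊆ {x : V | x ≠ N.d})
    (hAhatBhat : Ahat ⊆ Bhat) (hBhat : Bhat ⊆ {x : V | x ≠ N.d})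
    (w : V) (hw : w ≠ N.d) (hwB : w ∉ B ∪ Bhat) :
    (N.sigmaBar T (insert w A) Ahat - N.sigmaBar T A Ahat ≥
        N.sigmaBar T (insert w B) Bhat - N.sigmaBar T B Bhat) ∧
    (N.sigmaBar T A (insert w Ahat) - N.sigmaBar T A Ahat ≥
        N.sigmaBar T B (insert w Bhat) - N.sigmaBar T B Bhat) ∧
    (N.sigmaBar T A Ahat ≤ N.sigmaBar T B Bhat) := by
  have hdB : N.d ∉ B := fun h => hB h rfl
  have hdA : N.d ∉ A := fun h => hdB (hAB h)
  have hdBhat : N.d ∉ Bhat := fun h => hBhat h rfl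
  have hdAhat : N.d ∉ Ahat := fun h => hdBhat (hAhatBhat h)
  have hdwA : N.d ∉ insert w A := by
    rintro (h | h)
    · exact hw h.symm
    · exact hdA h
  have hdwB : N.d ∉ insert w B := by
    rintro (h | h)
    · exact hw h.symm
    · exact hdB h
  have hdwAhat : N.d ∉ insert w Ahat := by
    rintro (h | h)
    · exact hw h.symm
    · exact hdAhat h
  have hdwBhat : N.d ∉ insert w Bhat := by
    rintro (h | h)
    · exact hw h.symm
    · exact hdBhat h
  have hσ : ∀ (X Xhat : Set V), N.d ∉ X → N.d ∉ Xhat →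
      N.sigmaBar T X Xhat = (1 / (T : ℝ)) * ∑ t ∈ Finset.Icc 1 T, ∑ v, N.pfun X Xhat t v := by
    intro X Xhat hX hXhat
    rw [InfoNetwork.sigmaBar]
    congr 1
    exact Finset.sum_congr rfl fun t _ => Finset.sum_congr rfl fun v _ =>
      N.EX_eq_pfun hacyc hX hXhat t v
  have hTpos : (0:ℝ) ≤ 1 / (T : ℝ) := by positivity
  refine ⟨?_, ?_, ?_⟩
  · rw [hσ _ _ hdwA hdAhat, hσ _ _ hdA hdAhat, hσ _ _ hdwB hdBhat, hσ _ _ hdB hdBhat,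
      ← mul_sub, ← mul_sub]
    refine mul_le_mul_of_nonneg_left ?_ hTpos
    rw [← Finset.sum_sub_distrib, ← Finset.sum_sub_distrib]
    refine Finset.sum_le_sum fun t _ => ?_
    rw [← Finset.sum_sub_distrib, ← Finset.sum_sub_distrib]
    exact Finset.sum_le_sum fun v _ => N.pfun_submod1 hAB hAhatBhat hwB t v
  · rw [hσ _ _ hdA hdwAhat, hσ _ _ hdA hdAhat, hσ _ _ hdB hdwBhat, hσ _ _ hdB hdBhat,
      ← mul_sub, ← mul_sub]
    refine mul_le_mul_of_nonneg_left ?_ hTpos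
    rw [← Finset.sum_sub_distrib, ← Finset.sum_sub_distrib]
    refine Finset.sum_le_sum fun t _ => ?_
    rw [← Finset.sum_sub_distrib, ← Finset.sum_sub_distrib]
    exact Finset.sum_le_sum fun v _ => N.pfun_submod2 hAB hAhatBhat hwB t v
  · rw [hσ _ _ hdA hdAhat, hσ _ _ hdB hdBhat]
    refine mul_le_mul_of_nonneg_left ?_ hTpos
    exact Finset.sum_le_sum fun t _ => Finset.sum_le_sum fun v _ =>
      N.pfun_mono hAB hAhatBhat t v
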